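/- The correlation robust influence function is submodular: for all seed sets S ⊆ T ⊆ V and every node v ∈ V \ T, f^corr(S ∪ {v}) − f^corr(S) ≥ f^corr(T ∪ {v}) − f^corr(T). -/

import Mathlib

/-!
Write `π_i(S)` (`minInfluenceProb`) for `1` if `i ∈ S` and `π*_i` otherwise; then
`f^corr(S) = ∑ᵢ π_i(S)`.

* Every `θ ∈ Θ` influences `i` with probability at least `π_i(S)`: a path `γ` from `S` to `i`
  is live unless one of its edges is dead, so by the union bound it is live with probability at
  least `L(γ)`.
* One distribution attains all these bounds at once: draw `u` uniformly from `[0, 1)` and kill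
  the edge `(a, b)` when `u` lies on the arc of the circle `ℝ / ℤ` of length `1 - p(a, b)`
  starting at `1 - π_a(S)`. Since `π` drops by at most `1 - p(a, b)` along an edge, every node
  `j` influenced in this scenario has `u ≥ 1 - π_j(S)`, so `j` is influenced with probability at
  most `π_j(S)`.

Submodularity is then pointwise in `i`: `π_i(S ∪ {v}) = max (π_i(S)) (π_i({v}))`, `π_i` is
monotone in `S`, and `x ↦ max x c - x` is antitone.
-/

open scoped BigOperators

namespace CorrIM

variable {V : Type*} [Fintype V] [DecidableEq V]

/-- A node `i` is influenced: `i ∈ S`, or `i` is reachable from some node of `S`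
along the live edges of the scenario `c`. -/
def influenced (c : Finset (V × V)) (S : Finset V) (i : V) : Prop :=
  ∃ s ∈ S, Relation.ReflTransGen (fun a b : V => (a, b) ∈ c) s i

/-- `R c S` : the number of influenced nodes in scenario `c` with seed set `S`. -/
noncomputable def R (c : Finset (V × V)) (S : Finset V) : ℕ :=
  Set.ncard {i : V | influenced c S i}

/-- The Fréchet class `Θ` : probability distributions on scenarios (subsets of `E`)
whose marginals agree with the edge likelihoods `p`. -/
def memTheta (E : Finset (V × V)) (p : V × V → ℝ) (θ : Finset (V × V) → ℝ) : Prop :=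
  (∀ c, 0 ≤ θ c) ∧ (∀ c, θ c ≠ 0 → c ⊆ E) ∧ (∑ c : Finset (V × V), θ c) = 1 ∧
    ∀ e ∈ E, (∑ c : Finset (V × V), if e ∈ c then θ c else 0) = p e

/-- Expected number of influenced nodes under the distribution `θ`. -/
noncomputable def expInf (θ : Finset (V × V) → ℝ) (S : Finset V) : ℝ :=
  ∑ c : Finset (V × V), θ c * (R c S : ℝ)

/-- The correlation robust influence function `f^corr`. -/
noncomputable def fcorr (E : Finset (V × V)) (p : V × V → ℝ) (S : Finset V) : ℝ :=
  sInf {x : ℝ | ∃ θ, memTheta E p θ ∧ x = expInf θ S}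

open Classical in
/-- Probability of the event `A` under the distribution `θ`. -/
noncomputable def prob (θ : Finset (V × V) → ℝ) (A : Finset (V × V) → Prop) : ℝ :=
  ∑ c : Finset (V × V), if A c then θ c else 0

/-- `γ` (a list of nodes `i₀, i₁, …, i_λ`, `λ ≥ 1`) is a directed path from the
seed set `S` to the node `i` using edges of `E`. -/
def IsPathFrom (E : Finset (V × V)) (S : Finset V) (i : V) (γ : List V) : Prop :=
  2 ≤ γ.length ∧ (∃ s ∈ S, γ.head? = some s) ∧ γ.getLast? = some i ∧
    γ.Chain' (fun a b : V => (a, b) ∈ E)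

/-- The list of edges `(i₀,i₁), …, (i_{λ-1}, i_λ)` of a path `γ = [i₀, …, i_λ]`. -/
def pathEdges (γ : List V) : List (V × V) := γ.zip γ.tail

/-- The weight `L(γ) = 1 - ∑_{l=1}^{λ} (1 - p(i_{l-1}, i_l))` of a path. -/
noncomputable def L (p : V × V → ℝ) (γ : List V) : ℝ :=
  1 - ((pathEdges γ).map (fun e => 1 - p e)).sum

/-- `π*_i = max(0, max_{γ ∈ Γ(S,i)} L(γ))`, with value `0` when `Γ(S,i) = ∅`. -/
noncomputable def piStar (E : Finset (V × V)) (p : V × V → ℝ) (S : Finset V) (i : V) : ℝ :=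
  sSup (insert 0 {x : ℝ | ∃ γ : List V, IsPathFrom E S i γ ∧ x = L p γ})

/-- The independent cascade distribution `θ_ic` : each edge of `E` is live
independently with probability `p e`. -/
noncomputable def thetaIC (E : Finset (V × V)) (p : V × V → ℝ) (c : Finset (V × V)) : ℝ :=
  if c ⊆ E then (∏ e ∈ c, p e) * ∏ e ∈ E \ c, (1 - p e) else 0

/-- The independent cascade influence function `f^ic`. -/
noncomputable def fic (E : Finset (V × V)) (p : V × V → ℝ) (S : Finset V) : ℝ :=
  expInf (thetaIC E p) S

set_option linter.unusedSectionVars false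

lemma pathEdges_cons_cons (a b : V) (l : List V) :
    pathEdges (a :: b :: l) = (a, b) :: pathEdges (b :: l) := rfl

lemma isChain_iff_forall_mem_pathEdges {r : V → V → Prop} (γ : List V) :
    γ.IsChain r ↔ ∀ e ∈ pathEdges γ, r e.1 e.2 := by
  induction γ with
  | nil => simp [pathEdges]
  | cons a l ih =>
    cases l with
    | nil => simp [pathEdges]
    | cons b m => simp [List.isChain_cons_cons, pathEdges_cons_cons, ih]

lemma pathEdges_concat {γ : List V} (hγ : γ ≠ []) (b : V) :
    pathEdges (γ ++ [b]) = pathEdges γ ++ [(γ.getLast hγ, b)] := by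
  induction γ with
  | nil => contradiction
  | cons a l ih =>
    cases l with
    | nil => rfl
    | cons a' m =>
      simp only [List.cons_append, pathEdges_cons_cons]
      rw [← List.cons_append, ih (List.cons_ne_nil _ _), List.getLast_cons_cons]

section Paths

variable {E : Finset (V × V)} {p : V × V → ℝ} {S T : Finset V} {i : V} {γ : List V}

lemma IsPathFrom.mem_of_mem_pathEdges (hγ : IsPathFrom E S i γ) {e : V × V}
    (he : e ∈ pathEdges γ) : e ∈ E :=
  (isChain_iff_forall_mem_pathEdges γ).1 hγ.2.2.2 e he

lemma IsPathFrom.mono (hST : S ⊆ T) (hγ : IsPathFrom E S i γ) : IsPathFrom E T i γ := by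
  obtain ⟨hlen, ⟨s, hs, hhead⟩, hlast, hchain⟩ := hγ
  exact ⟨hlen, ⟨s, hST hs, hhead⟩, hlast, hchain⟩

lemma isPathFrom_insert_iff {v : V} :
    IsPathFrom E (insert v S) i γ ↔ IsPathFrom E S i γ ∨ IsPathFrom E {v} i γ := by
  simp only [IsPathFrom, Finset.mem_insert, Finset.mem_singleton]
  grind

lemma IsPathFrom.concat {a b : V} (hγ : IsPathFrom E S a γ) (he : (a, b) ∈ E) :
    IsPathFrom E S b (γ ++ [b]) := by
  obtain ⟨hlen, ⟨s, hs, hhead⟩, hlast, hchain⟩ := hγ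
  refine ⟨by simp only [List.length_append, List.length_singleton]; omega,
    ⟨s, hs, by cases γ <;> simp_all⟩, by simp, ?_⟩
  change List.IsChain _ (γ ++ [b])
  rw [List.isChain_append]
  exact ⟨hchain, List.isChain_singleton b, by simp_all⟩

lemma IsPathFrom.influenced (hγ : IsPathFrom E S i γ) {c : Finset (V × V)}
    (hc : ∀ e ∈ pathEdges γ, e ∈ c) : influenced c S i := by
  obtain ⟨hlen, ⟨s, hs, hhead⟩, hlast, -⟩ := hγ
  have hne : γ ≠ [] := by rintro rfl; simp at hlen
  refine ⟨s, hs, ?_⟩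
  have := List.relationReflTransGen_of_exists_isChain γ
    ((isChain_iff_forall_mem_pathEdges (r := fun a b => (a, b) ∈ c) γ).2 hc) hne
  rwa [(List.head_eq_iff_head?_eq_some hne).2 hhead,
    (List.getLast_eq_iff_getLast?_eq_some hne).2 hlast] at this

lemma L_concat {a b : V} (hlast : γ.getLast? = some a) :
    L p (γ ++ [b]) = L p γ - (1 - p (a, b)) := by
  have hne : γ ≠ [] := by rintro rfl; simp at hlast
  rw [List.getLast?_eq_some_getLast hne, Option.some_inj] at hlast
  simp only [L, pathEdges_concat hne, hlast, List.map_append, List.sum_append,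
    List.map_singleton, List.sum_singleton]
  ring

end Paths

section PiStar

variable {E : Finset (V × V)} {p : V × V → ℝ} {S T : Finset V} {i : V} {γ : List V}

lemma L_le_one (hp : ∀ e ∈ E, 0 ≤ p e ∧ p e ≤ 1) (hγ : IsPathFrom E S i γ) :
    L p γ ≤ 1 := by
  have : 0 ≤ ((pathEdges γ).map fun e => 1 - p e).sum :=
    List.sum_nonneg fun _ hx => by
      obtain ⟨e, he, rfl⟩ := List.mem_map.1 hx
      linarith [(hp e (hγ.mem_of_mem_pathEdges he)).2]
  rw [L]
  linarith

lemma bddAbove_piStar (hp : ∀ e ∈ E, 0 ≤ p e ∧ p e ≤ 1) (S : Finset V) (i : V) :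
    BddAbove (insert 0 {x : ℝ | ∃ γ : List V, IsPathFrom E S i γ ∧ x = L p γ}) := by
  refine ⟨1, ?_⟩
  rintro x (rfl | ⟨γ, hγ, rfl⟩)
  exacts [zero_le_one, L_le_one hp hγ]

lemma piStar_nonneg (hp : ∀ e ∈ E, 0 ≤ p e ∧ p e ≤ 1) (S : Finset V) (i : V) :
    0 ≤ piStar E p S i :=
  le_csSup (bddAbove_piStar hp S i) (Set.mem_insert 0 _)

lemma L_le_piStar (hp : ∀ e ∈ E, 0 ≤ p e ∧ p e ≤ 1) (hγ : IsPathFrom E S i γ) :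
    L p γ ≤ piStar E p S i :=
  le_csSup (bddAbove_piStar hp S i) (Set.mem_insert_of_mem _ ⟨γ, hγ, rfl⟩)

lemma piStar_le {y : ℝ} (hy : 0 ≤ y) (hL : ∀ γ, IsPathFrom E S i γ → L p γ ≤ y) :
    piStar E p S i ≤ y := by
  refine csSup_le (Set.insert_nonempty _ _) ?_
  rintro x (rfl | ⟨γ, hγ, rfl⟩)
  exacts [hy, hL γ hγ]

lemma piStar_le_one (hp : ∀ e ∈ E, 0 ≤ p e ∧ p e ≤ 1) (S : Finset V) (i : V) :
    piStar E p S i ≤ 1 :=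
  piStar_le zero_le_one fun _ hγ => L_le_one hp hγ

lemma piStar_mono (hp : ∀ e ∈ E, 0 ≤ p e ∧ p e ≤ 1) (hST : S ⊆ T) (i : V) :
    piStar E p S i ≤ piStar E p T i :=
  piStar_le (piStar_nonneg hp T i) fun _ hγ => L_le_piStar hp (hγ.mono hST)

lemma piStar_insert (hp : ∀ e ∈ E, 0 ≤ p e ∧ p e ≤ 1) (S : Finset V) (v i : V) :
    piStar E p (insert v S) i = max (piStar E p S i) (piStar E p {v} i) := by
  have hunion : insert 0 {x : ℝ | ∃ γ, IsPathFrom E (insert v S) i γ ∧ x = L p γ} =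
      insert 0 {x | ∃ γ, IsPathFrom E S i γ ∧ x = L p γ} ∪
        insert 0 {x | ∃ γ, IsPathFrom E {v} i γ ∧ x = L p γ} := by
    ext x
    simp only [isPathFrom_insert_iff, Set.mem_insert_iff, Set.mem_union, Set.mem_ofPred_eq]
    grind
  rw [piStar, hunion, csSup_union (bddAbove_piStar hp S i) (Set.insert_nonempty _ _)
    (bddAbove_piStar hp {v} i) (Set.insert_nonempty _ _)]
  rfl

lemma piStar_le_piStar_add (hp : ∀ e ∈ E, 0 ≤ p e ∧ p e ≤ 1) {a b : V}
    (he : (a, b) ∈ E) :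
    piStar E p S a ≤ piStar E p S b + (1 - p (a, b)) := by
  refine piStar_le (by linarith [piStar_nonneg hp S b, (hp _ he).2]) fun γ hγ => ?_
  have := L_le_piStar hp (hγ.concat he)
  rw [L_concat hγ.2.2.1] at this
  linarith

end PiStar

noncomputable def minInfluenceProb (E : Finset (V × V)) (p : V × V → ℝ) (S : Finset V)
    (i : V) : ℝ :=
  if i ∈ S then 1 else piStar E p S i

section MinInfluenceProb

variable {E : Finset (V × V)} {p : V × V → ℝ} {S T : Finset V}

lemma minInfluenceProb_of_mem {i : V} (hi : i ∈ S) : minInfluenceProb E p S i = 1 :=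
  if_pos hi

lemma minInfluenceProb_of_notMem {i : V} (hi : i ∉ S) :
    minInfluenceProb E p S i = piStar E p S i :=
  if_neg hi

lemma minInfluenceProb_nonneg (hp : ∀ e ∈ E, 0 ≤ p e ∧ p e ≤ 1) (S : Finset V) (i : V) :
    0 ≤ minInfluenceProb E p S i := by
  unfold minInfluenceProb
  split_ifs
  exacts [zero_le_one, piStar_nonneg hp S i]

lemma minInfluenceProb_le_one (hp : ∀ e ∈ E, 0 ≤ p e ∧ p e ≤ 1) (S : Finset V) (i : V) :
    minInfluenceProb E p S i ≤ 1 := by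
  unfold minInfluenceProb
  split_ifs
  exacts [le_rfl, piStar_le_one hp S i]

lemma minInfluenceProb_mono (hp : ∀ e ∈ E, 0 ≤ p e ∧ p e ≤ 1) (hST : S ⊆ T) (i : V) :
    minInfluenceProb E p S i ≤ minInfluenceProb E p T i := by
  by_cases hiT : i ∈ T
  · rw [minInfluenceProb_of_mem hiT]
    exact minInfluenceProb_le_one hp S i
  · rw [minInfluenceProb_of_notMem hiT, minInfluenceProb_of_notMem fun hiS => hiT (hST hiS)]
    exact piStar_mono hp hST i

lemma minInfluenceProb_insert (hp : ∀ e ∈ E, 0 ≤ p e ∧ p e ≤ 1) (S : Finset V) (v i : V) :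
    minInfluenceProb E p (insert v S) i =
      max (minInfluenceProb E p S i) (minInfluenceProb E p {v} i) := by
  by_cases hiv : i = v
  · subst hiv
    rw [minInfluenceProb_of_mem (S.mem_insert_self i),
      minInfluenceProb_of_mem (Finset.mem_singleton_self i),
      max_eq_right (minInfluenceProb_le_one hp S i)]
  by_cases hiS : i ∈ S
  · rw [minInfluenceProb_of_mem (Finset.mem_insert_of_mem hiS), minInfluenceProb_of_mem hiS,
      max_eq_left (minInfluenceProb_le_one hp _ i)]
  rw [minInfluenceProb_of_notMem (by simp [hiv, hiS]), minInfluenceProb_of_notMem hiS,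
    minInfluenceProb_of_notMem (by simpa using hiv), piStar_insert hp]

lemma minInfluenceProb_sub_le (hp : ∀ e ∈ E, 0 ≤ p e ∧ p e ≤ 1) {a b : V}
    (he : (a, b) ∈ E) :
    minInfluenceProb E p S a - (1 - p (a, b)) ≤ minInfluenceProb E p S b := by
  by_cases hb : b ∈ S
  · rw [minInfluenceProb_of_mem hb]
    linarith [minInfluenceProb_le_one hp S a, (hp _ he).2]
  rw [minInfluenceProb_of_notMem hb]
  by_cases ha : a ∈ S
  · have hab : IsPathFrom E S b [a, b] :=
      ⟨le_rfl, ⟨a, ha, rfl⟩, rfl, List.isChain_pair.2 he⟩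
    have hL : L p [a, b] = p (a, b) := by simp [L, pathEdges]
    rw [minInfluenceProb_of_mem ha]
    linarith [L_le_piStar hp hab]
  · rw [minInfluenceProb_of_notMem ha]
    linarith [piStar_le_piStar_add (S := S) hp he]

end MinInfluenceProb

section Prob

variable {θ : Finset (V × V) → ℝ} {A B : Finset (V × V) → Prop}

lemma expInf_eq_sum_prob (θ : Finset (V × V) → ℝ) (S : Finset V) :
    expInf θ S = ∑ i, prob θ (influenced · S i) := by
  classical
  have hR (c : Finset (V × V)) : (R c S : ℝ) = ∑ i, if influenced c S i then 1 else 0 := by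
    rw [R, Set.ncard_eq_toFinset_card', Set.toFinset_ofPred, Finset.card_filter, Nat.cast_sum]
    congr! 2
    split_ifs <;> simp
  simp only [expInf, prob, hR, Finset.mul_sum, mul_ite, mul_one, mul_zero]
  rw [Finset.sum_comm]

lemma prob_mono (hθ : ∀ c, 0 ≤ θ c) (h : ∀ c, A c → B c) : prob θ A ≤ prob θ B :=
  Finset.sum_le_sum fun c _ => by
    by_cases hA : A c
    · simp [hA, h c hA]
    · by_cases hB : B c <;> simp [hA, hB, hθ c]

lemma prob_or_le (hθ : ∀ c, 0 ≤ θ c) :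
    prob θ (fun c => A c ∨ B c) ≤ prob θ A + prob θ B := by
  rw [prob, prob, prob, ← Finset.sum_add_distrib]
  exact Finset.sum_le_sum fun c _ => by
    by_cases hA : A c <;> by_cases hB : B c <;> simp [hA, hB, hθ c]

lemma prob_exists_mem_le {ι : Type*} (hθ : ∀ c, 0 ≤ θ c) (X : ι → Finset (V × V) → Prop)
    (l : List ι) :
    prob θ (fun c => ∃ x ∈ l, X x c) ≤ (l.map fun x => prob θ (X x)).sum := by
  induction l with
  | nil => simp [prob]
  | cons x l ih =>
    simp only [List.mem_cons, or_and_right, exists_or, exists_eq_left, List.map_cons,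
      List.sum_cons]
    linarith [prob_or_le (A := X x) (B := fun c => ∃ y ∈ l, X y c) hθ]

lemma prob_not (A : Finset (V × V) → Prop) : prob θ (¬ A ·) = ∑ c, θ c - prob θ A := by
  rw [eq_sub_iff_add_eq, prob, prob, ← Finset.sum_add_distrib]
  exact Finset.sum_congr rfl fun c _ => by by_cases hA : A c <;> simp [hA]

variable {E : Finset (V × V)} {p : V × V → ℝ}

lemma prob_notMem (hθ : memTheta E p θ) {e : V × V} (he : e ∈ E) :
    prob θ (e ∉ ·) = 1 - p e := by
  rw [prob_not, hθ.2.2.1, ← hθ.2.2.2 e he, prob]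
  congr!

lemma L_le_prob_influenced (hθ : memTheta E p θ) {S : Finset V} {i : V} {γ : List V}
    (hγ : IsPathFrom E S i γ) :
    L p γ ≤ prob θ (influenced · S i) := by
  have hdead :
      ((pathEdges γ).map fun e => 1 - p e) = (pathEdges γ).map fun e => prob θ (e ∉ ·) :=
    List.map_congr_left fun e he => (prob_notMem hθ (hγ.mem_of_mem_pathEdges he)).symm
  calc L p γ ≤ 1 - prob θ (fun c => ∃ e ∈ pathEdges γ, e ∉ c) := by
        rw [L, hdead]
        linarith [prob_exists_mem_le hθ.1 (fun e c => e ∉ c) (pathEdges γ)]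
    _ = prob θ (fun c => ∀ e ∈ pathEdges γ, e ∈ c) := by
        rw [← hθ.2.2.1, ← prob_not]
        simp
    _ ≤ prob θ (influenced · S i) := prob_mono hθ.1 fun c hc => hγ.influenced hc

lemma minInfluenceProb_le_prob (hθ : memTheta E p θ) (S : Finset V) (i : V) :
    minInfluenceProb E p S i ≤ prob θ (influenced · S i) := by
  by_cases hi : i ∈ S
  · rw [minInfluenceProb_of_mem hi, ← hθ.2.2.1]
    exact Finset.sum_le_sum fun c _ => by simp [show influenced c S i from ⟨i, hi, .refl⟩]
  · rw [minInfluenceProb_of_notMem hi]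
    exact piStar_le (Finset.sum_nonneg fun c _ => by split_ifs <;> simp [hθ.1 c])
      fun γ hγ => L_le_prob_influenced hθ hγ

end Prob

section WorstCase

open MeasureTheory Set

/-- The arc `[x, x + w)` of the circle `ℝ / ℤ` as a subset of `[0, 1)`, for `0 ≤ x ≤ 1`. -/
def arc (x w : ℝ) : Set ℝ := Ico x (min (x + w) 1) ∪ Ico 0 (x + w - 1)

lemma measurableSet_arc (x w : ℝ) : MeasurableSet (arc x w) :=
  measurableSet_Ico.union measurableSet_Ico

lemma arc_subset_Ico {x w : ℝ} (hx : 0 ≤ x) (hx' : x ≤ 1) (hw : w ≤ 1) :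
    arc x w ⊆ Ico 0 1 := by
  rintro u (⟨hxu, hu⟩ | ⟨h0u, hu⟩)
  · exact ⟨hx.trans hxu, hu.trans_le (min_le_right _ _)⟩
  · exact ⟨h0u, by linarith⟩

lemma volume_real_arc {x w : ℝ} (hx : x ≤ 1) (hw : 0 ≤ w) (hw' : w ≤ 1) :
    volume.real (arc x w) = w := by
  rcases le_total (x + w) 1 with h | h
  · rw [arc, min_eq_left h, Ico_eq_empty_of_le (by linarith : x + w - 1 ≤ 0), union_empty,
      Real.volume_real_Ico_of_le (by linarith)]
    ring
  · have hdisj : Disjoint (Ico x (min (x + w) 1)) (Ico 0 (x + w - 1)) :=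
      Set.disjoint_left.2 fun u hu hu' => by linarith [hu.1, hu'.2]
    rw [arc, measureReal_union hdisj measurableSet_Ico (by simp) (by simp), min_eq_right h,
      Real.volume_real_Ico_of_le hx, Real.volume_real_Ico_of_le (by linarith)]
    ring

lemma add_le_of_notMem_arc {x w u : ℝ} (hxu : x ≤ u) (hu : u < 1) (h : u ∉ arc x w) :
    x + w ≤ u := by
  simp only [arc, mem_union, mem_Ico, not_or, not_and, not_lt] at h
  exact (min_le_iff.1 (h.1 hxu)).resolve_right hu.not_ge

variable (E : Finset (V × V)) (p : V × V → ℝ) (S : Finset V)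

open Classical in
noncomputable def liveEdges (u : ℝ) : Finset (V × V) :=
  {e ∈ E | u ∉ arc (1 - minInfluenceProb E p S e.1) (1 - p e)}

noncomputable def thetaWorst (c : Finset (V × V)) : ℝ :=
  (volume.restrict (Ico (0 : ℝ) 1)).real (liveEdges E p S ⁻¹' {c})

variable {E p S}

open Classical in
lemma mem_liveEdges {u : ℝ} {e : V × V} :
    e ∈ liveEdges E p S u ↔ e ∈ E ∧ u ∉ arc (1 - minInfluenceProb E p S e.1) (1 - p e) :=
  Finset.mem_filter

lemma measurableSet_liveEdges_preimage (c : Finset (V × V)) :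
    MeasurableSet (liveEdges E p S ⁻¹' {c}) := by
  have : liveEdges E p S ⁻¹' {c} =
      {u | ∀ e, e ∈ E ∧ u ∉ arc (1 - minInfluenceProb E p S e.1) (1 - p e) ↔ e ∈ c} := by
    ext u
    simp [liveEdges, Finset.ext_iff]
  rw [this]
  refine measurableSet_setOfPred.2 (Measurable.forall fun e => ?_)
  exact (measurable_const.and (measurableSet_arc _ _).mem.not).iff measurable_const

lemma prob_thetaWorst (A : Finset (V × V) → Prop) :
    prob (thetaWorst E p S) A =
      (volume.restrict (Ico (0 : ℝ) 1)).real {u | A (liveEdges E p S u)} := by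
  classical
  simp only [prob, thetaWorst]
  rw [← Finset.sum_filter, sum_measureReal_preimage_singleton _
    fun c _ => measurableSet_liveEdges_preimage c]
  congr 1
  ext u
  simp

lemma memTheta_thetaWorst (hp : ∀ e ∈ E, 0 ≤ p e ∧ p e ≤ 1) :
    memTheta E p (thetaWorst E p S) := by
  have htotal : ∑ c, thetaWorst E p S c = 1 := by
    have := prob_thetaWorst (E := E) (p := p) (S := S) fun _ => True
    simp only [prob, if_true, ofPred_true, measureReal_restrict_apply_univ] at this
    rw [this, Real.volume_real_Ico_of_le zero_le_one, sub_zero]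
  refine ⟨fun c => measureReal_nonneg, fun c hc => ?_, htotal, fun e he => ?_⟩
  · by_contra hcE
    refine hc ?_
    have hempty : liveEdges E p S ⁻¹' {c} = ∅ := eq_empty_of_forall_notMem fun u hu =>
      hcE (mem_singleton_iff.1 hu ▸ fun e he => (mem_liveEdges.1 he).1)
    rw [thetaWorst, hempty, measureReal_empty]
  · obtain ⟨hp0, hp1⟩ := hp e he
    have hdead := arc_subset_Ico (x := 1 - minInfluenceProb E p S e.1) (w := 1 - p e)
      (by linarith [minInfluenceProb_le_one hp S e.1])
      (by linarith [minInfluenceProb_nonneg hp S e.1]) (by linarith)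
    have hlive :
        {u | e ∈ liveEdges E p S u} = (arc (1 - minInfluenceProb E p S e.1) (1 - p e))ᶜ := by
      ext u
      simp [mem_liveEdges, he]
    calc (∑ c, if e ∈ c then thetaWorst E p S c else 0)
        = prob (thetaWorst E p S) (e ∈ ·) := by
          rw [prob]; congr!
      _ = p e := by
        rw [prob_thetaWorst, hlive, measureReal_compl (measurableSet_arc _ _),
          measureReal_restrict_apply_univ, measureReal_restrict_apply (measurableSet_arc _ _),
          inter_eq_left.2 hdead, Real.volume_real_Ico_of_le zero_le_one,
          volume_real_arc (by linarith [minInfluenceProb_nonneg hp S e.1]) (by linarith)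
            (by linarith)]
        ring

lemma one_sub_minInfluenceProb_le (hp : ∀ e ∈ E, 0 ≤ p e ∧ p e ≤ 1) {u : ℝ}
    (hu : u ∈ Ico (0 : ℝ) 1) {s j : V} (hs : s ∈ S)
    (h : Relation.ReflTransGen (fun a b => (a, b) ∈ liveEdges E p S u) s j) :
    1 - minInfluenceProb E p S j ≤ u := by
  induction h with
  | refl => linarith [minInfluenceProb_of_mem (E := E) (p := p) hs, hu.1]
  | tail _ hbj ih =>
    obtain ⟨hE, hlive⟩ := mem_liveEdges.1 hbj
    linarith [add_le_of_notMem_arc ih hu.2 hlive, minInfluenceProb_sub_le hp (S := S) hE]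

lemma prob_thetaWorst_influenced_le (hp : ∀ e ∈ E, 0 ≤ p e ∧ p e ≤ 1) (i : V) :
    prob (thetaWorst E p S) (influenced · S i) ≤ minInfluenceProb E p S i := by
  rw [prob_thetaWorst, measureReal_restrict_apply' measurableSet_Ico]
  calc volume.real ({u | influenced (liveEdges E p S u) S i} ∩ Ico 0 1)
      ≤ volume.real (Ico (1 - minInfluenceProb E p S i) 1) := by
        refine measureReal_mono (fun u ⟨⟨s, hs, hsu⟩, hu⟩ => ?_) (by simp)
        exact ⟨one_sub_minInfluenceProb_le hp hu hs hsu, hu.2⟩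
    _ = minInfluenceProb E p S i := by
        rw [Real.volume_real_Ico_of_le (by linarith [minInfluenceProb_nonneg hp S i])]
        ring

end WorstCase

lemma isLeast_expInf {E : Finset (V × V)} {p : V × V → ℝ}
    (hp : ∀ e ∈ E, 0 ≤ p e ∧ p e ≤ 1) (S : Finset V) :
    IsLeast {x : ℝ | ∃ θ, memTheta E p θ ∧ x = expInf θ S}
      (∑ i, minInfluenceProb E p S i) := by
  refine ⟨⟨thetaWorst E p S, memTheta_thetaWorst hp, le_antisymm ?_ ?_⟩, ?_⟩
  · rw [expInf_eq_sum_prob]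
    exact Finset.sum_le_sum fun i _ => minInfluenceProb_le_prob (memTheta_thetaWorst hp) S i
  · rw [expInf_eq_sum_prob]
    exact Finset.sum_le_sum fun i _ => prob_thetaWorst_influenced_le hp i
  · rintro _ ⟨θ, hθ, rfl⟩
    rw [expInf_eq_sum_prob]
    exact Finset.sum_le_sum fun i _ => minInfluenceProb_le_prob hθ S i

lemma fcorr_eq_sum_minInfluenceProb {E : Finset (V × V)} {p : V × V → ℝ}
    (hp : ∀ e ∈ E, 0 ≤ p e ∧ p e ≤ 1) (S : Finset V) :
    fcorr E p S = ∑ i, minInfluenceProb E p S i :=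
  (isLeast_expInf hp S).csInf_eq

theorem fcorr_submodular_general (E : Finset (V × V)) (p : V × V → ℝ)
    (hp : ∀ e ∈ E, 0 ≤ p e ∧ p e ≤ 1)
    (S T : Finset V) (hST : S ⊆ T) (v : V) :
    fcorr E p (insert v T) - fcorr E p T ≤ fcorr E p (insert v S) - fcorr E p S := by
  simp only [fcorr_eq_sum_minInfluenceProb hp, ← Finset.sum_sub_distrib,
    minInfluenceProb_insert hp, ← max_sub_sub_right, sub_self]
  gcongr with i
  exact minInfluenceProb_mono hp hST i

/-- the correlation robust influence function is submodular: for all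
`S ⊆ T ⊆ V` and `v ∈ V \ T`,
`f^corr(S ∪ {v}) - f^corr(S) ≥ f^corr(T ∪ {v}) - f^corr(T)`. -/
theorem fcorr_submodular (E : Finset (V × V)) (p : V × V → ℝ)
    (hp : ∀ e ∈ E, 0 ≤ p e ∧ p e ≤ 1)
    (S T : Finset V) (hST : S ⊆ T) (v : V) (hv : v ∉ T) :
    fcorr E p (insert v T) - fcorr E p T ≤ fcorr E p (insert v S) - fcorr E p S :=
  fcorr_submodular_general E p hp S T hST v

end CorrIM
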